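/- For every positive integer s, the number of self-conjugate partitions that are simultaneously s-core and (s+1)-core equals C(s, ⌊s/2⌋). -/

import Mathlib

/-- A partition, given as a weakly decreasing sequence of natural numbers with
finite support.  `parts i` is the size of the `(i+1)`-st row (0-indexed). -/
structure YPartition where
  parts : ℕ → ℕ
  antitone : ∀ ⦃i j : ℕ⦄, i ≤ j → parts j ≤ parts i
  support_finite : ∃ N, ∀ i, N ≤ i → parts i = 0

namespace YPartition

/-- The conjugate partition: `conj p j` is the number of rows having more than `j`
boxes, i.e. the length of the `(j+1)`-st column (0-indexed). -/
noncomputable def conj (p : YPartition) (j : ℕ) : ℕ :=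
  Set.ncard {i : ℕ | j < p.parts i}

/-- `p.IsSelfConjugate` means the conjugate of `p` equals `p`. -/
def IsSelfConjugate (p : YPartition) : Prop :=
  ∀ j, p.conj j = p.parts j

/-- The hook length of the (0-indexed) box `(i, j)`; in 1-indexed terms this is
`λ_{i+1} + λ'_{j+1} - (i+1) - (j+1) + 1`. -/
noncomputable def hook (p : YPartition) (i j : ℕ) : ℕ :=
  p.parts i + p.conj j - i - j - 1

/-- `p.IsCore t` means no hook length of a box of `p` is divisible by `t`. -/
def IsCore (p : YPartition) (t : ℕ) : Prop :=
  ∀ i j, j < p.parts i → ¬ (t ∣ p.hook i j)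

/-- The set of main diagonal hook lengths of `p`. -/
noncomputable def MD (p : YPartition) : Set ℕ :=
  {h | ∃ i, i < p.parts i ∧ h = p.hook i i}

end YPartition


/- helpers -/
private lemma dvd_small {s d : ℤ} (hs : 0 < s) (h : s ∣ d) (h0 : 0 ≤ d) (h1 : d < s) : d = 0 := by
  obtain ⟨q, rfl⟩ := h
  rcases lt_trichotomy q 0 with hq | hq | hq
  · nlinarith
  · simp [hq]
  · nlinarith

private lemma downclosed_card (t : Finset ℕ) (h : ∀ a ∈ t, ∀ b, b ≤ a → b ∈ t) :
    ∀ k, k ∈ t ↔ k < t.card := by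
  rcases t.eq_empty_or_nonempty with rfl | hne
  · simp
  · have hmax := t.max'_mem hne
    have ht : t = Finset.range (t.max' hne + 1) := by
      ext b
      simp only [Finset.mem_range]
      constructor
      · intro hb; exact Nat.lt_succ_of_le (t.le_max' b hb)
      · intro hb; exact h _ hmax b (Nat.lt_succ_iff.1 hb)
    intro k
    rw [ht, Finset.card_range, Finset.mem_range]

private lemma strictAnti_range_eq {f h : ℕ → ℤ} (hf : StrictAnti f) (hh : StrictAnti h)
    (hr : ∀ n : ℤ, (∃ i, f i = n) ↔ (∃ i, h i = n)) : ∀ i, f i = h i := by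
  intro i
  induction i using Nat.strong_induction_on with
  | _ i IH =>
    by_contra hne
    obtain ⟨j, hj⟩ := (hr (f i)).1 ⟨i, rfl⟩
    obtain ⟨k, hk⟩ := (hr (h i)).2 ⟨i, rfl⟩
    rcases lt_trichotomy (f i) (h i) with h1 | h1 | h1
    · -- f k = h i > f i  ⇒ k < i
      have hki : k < i := by
        by_contra hc
        push_neg at hc
        have := hf.antitone hc
        omega
      have := IH k hki
      have : h k = h i := by omega
      have := hh.injective this
      omega
    · exact hne h1
    · have hji : j < i := by
        by_contra hc
        push_neg at hc
        have := hh.antitone hc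
        omega
      have := IH j hji
      have : f j = f i := by omega
      have := hf.injective this
      omega

private lemma nat_smono_add (f : ℕ → ℕ) (hf : ∀ n, f n < f (n + 1)) :
    ∀ k d, f k + d ≤ f (k + d) := by
  intro k d
  induction d with
  | zero => simp
  | succ d IH =>
    have h2 : k + (d + 1) = (k + d) + 1 := rfl
    rw [h2]
    have := hf (k + d)
    omega

namespace YPartition

variable (p : YPartition)

noncomputable def g (p : YPartition) (i : ℕ) : ℤ := (p.parts i : ℤ) - i

noncomputable def cg (p : YPartition) (j : ℕ) : ℤ := (p.conj j : ℤ) - j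

lemma parts_antitone {i j : ℕ} (hij : i ≤ j) : p.parts j ≤ p.parts i := p.antitone hij

lemma g_strictAnti : StrictAnti p.g := by
  apply strictAnti_nat_of_succ_lt
  intro n
  have := p.parts_antitone (by omega : n ≤ n + 1)
  simp only [g]
  push_cast
  omega

lemma ext' {p q : YPartition} (h : ∀ i, p.parts i = q.parts i) : p = q := by
  cases p; cases q
  simp only [mk.injEq]
  funext i
  exact h i

/-- KEY: `i < conj j ↔ j < parts i`. -/
lemma lt_conj_iff (i j : ℕ) : i < p.conj j ↔ j < p.parts i := by
  classical
  obtain ⟨N, hN⟩ := p.support_finite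
  have hsub : {i : ℕ | j < p.parts i} ⊆ Set.Iio N := by
    intro x hx
    simp only [Set.mem_setOf_eq] at hx
    simp only [Set.mem_Iio]
    by_contra hc
    push_neg at hc
    have := hN x hc
    omega
  have hfin : {i : ℕ | j < p.parts i}.Finite := (Set.finite_Iio N).subset hsub
  have hcard : p.conj j = hfin.toFinset.card := by
    rw [conj, Set.ncard_eq_toFinset_card _ hfin]
  have hdc := downclosed_card hfin.toFinset ?_
  · rw [hcard]
    have := (hdc i).symm
    rw [this]
    simp
  · intro a ha b hb
    simp only [Set.Finite.mem_toFinset, Set.mem_setOf_eq] at ha ⊢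
    exact lt_of_lt_of_le ha (p.parts_antitone hb)

lemma conj_antitone {j k : ℕ} (hjk : j ≤ k) : p.conj k ≤ p.conj j := by
  by_contra hc
  push_neg at hc
  have h1 : p.conj j < p.conj k := hc
  have h2 := (p.lt_conj_iff (p.conj j) k).1 h1
  have h3 : j < p.parts (p.conj j) := lt_of_le_of_lt hjk h2
  exact lt_irrefl _ ((p.lt_conj_iff (p.conj j) j).2 h3)

lemma cg_strictAnti : StrictAnti p.cg := by
  apply strictAnti_nat_of_succ_lt
  intro n
  have := p.conj_antitone (by omega : n ≤ n + 1)
  simp only [cg]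
  push_cast
  omega

/-- PATH forward: a bead and a conjugate bead never sum to 1. -/
lemma g_add_cg_ne_one (i j : ℕ) : p.g i + p.cg j ≠ 1 := by
  simp only [g, cg]
  by_cases h : j < p.parts i
  · have h2 := (p.lt_conj_iff i j).2 h
    push_cast
    omega
  · push_neg at h
    have h2 : ¬ i < p.conj j := fun hc => absurd ((p.lt_conj_iff i j).1 hc) (by omega)
    push_neg at h2
    push_cast
    omega

/-- Totality: each integer `n` is a bead or `1 - n` is a conjugate bead. -/
lemma tot (n : ℤ) : (∃ i, p.g i = n) ∨ (∃ j, p.cg j = 1 - n) := by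
  classical
  obtain ⟨N, hN⟩ := p.support_finite
  have hsub : {i : ℕ | n + i ≤ (p.parts i : ℤ)} ⊆ Set.Iio (N + (-n).toNat + 1) := by
    intro x hx
    simp only [Set.mem_setOf_eq] at hx
    simp only [Set.mem_Iio]
    by_contra hc
    push_neg at hc
    have hx2 : N ≤ x := by omega
    have := hN x hx2
    rw [this] at hx
    simp at hx
    omega
  have hfin : {i : ℕ | n + i ≤ (p.parts i : ℤ)}.Finite := (Set.finite_Iio _).subset hsub
  set a := hfin.toFinset.card with ha
  have hdc := downclosed_card hfin.toFinset ?_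
  swap
  · intro x hx b hb
    simp only [Set.Finite.mem_toFinset, Set.mem_setOf_eq] at hx ⊢
    have := p.parts_antitone hb
    push_cast
    omega
  have hmem : ∀ k : ℕ, (n + k ≤ (p.parts k : ℤ)) ↔ k < a := by
    intro k
    rw [← hdc k]
    simp
  rcases Nat.eq_zero_or_pos a with ha0 | hapos
  · -- no i with parts i ≥ n + i; so parts 0 < n, n ≥ 1
    right
    have h0 : ¬ (n + ((0:ℕ):ℤ) ≤ (p.parts 0 : ℤ)) := by rw [hmem 0]; omega
    push_neg at h0
    have hn1 : 1 ≤ n := by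
      have := Int.ofNat_nonneg (p.parts 0)
      push_cast at h0
      omega
    refine ⟨(n - 1).toNat, ?_⟩
    have hj : ((n - 1).toNat : ℤ) = n - 1 := Int.toNat_of_nonneg (by omega)
    have hconj : p.conj (n - 1).toNat = 0 := by
      by_contra hc
      have : 0 < p.conj (n - 1).toNat := Nat.pos_of_ne_zero hc
      have h2 := (p.lt_conj_iff 0 _).1 this
      -- parts 0 > (n-1).toNat
      have : (n - 1) < (p.parts 0 : ℤ) := by
        calc (n-1 : ℤ) = ((n-1).toNat : ℤ) := hj.symm
        _ < (p.parts 0 : ℤ) := by exact_mod_cast h2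
      omega
    rw [cg, hconj, hj]
    push_cast
    ring
  · -- a ≥ 1
    by_cases hg : (p.parts (a - 1) : ℤ) = n + (a - 1 : ℕ)
    · exact Or.inl ⟨a - 1, by rw [g, hg]; ring⟩
    · right
      have hi : n + (a - 1 : ℕ) ≤ (p.parts (a - 1) : ℤ) := (hmem _).2 (by omega)
      have hi' : n + (a - 1 : ℕ) + 1 ≤ (p.parts (a - 1) : ℤ) := by omega
      have hna : ¬ (n + a ≤ (p.parts a : ℤ)) := by rw [hmem]; omega
      push_neg at hna
      have hcast : ((a - 1 : ℕ) : ℤ) = (a : ℤ) - 1 := by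
        have : 1 ≤ a := hapos
        push_cast [this]
        omega
      have hj0 : (0 : ℤ) ≤ n + a - 1 := by
        have := Int.ofNat_nonneg (p.parts a)
        omega
      refine ⟨(n + a - 1).toNat, ?_⟩
      have hj : ((n + a - 1).toNat : ℤ) = n + a - 1 := Int.toNat_of_nonneg hj0
      have hconj : p.conj (n + a - 1).toNat = a := by
        have hlt : ∀ i' : ℕ, i' < p.conj (n + a - 1).toNat ↔ i' < a := by
          intro i'
          rw [p.lt_conj_iff]
          constructor
          · intro hp
            by_contra hc
            push_neg at hc
            have h1 := p.parts_antitone hc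
            have h2 : (n + a - 1 : ℤ) < (p.parts i' : ℤ) := by
              rw [← hj]; exact_mod_cast hp
            have : (p.parts i' : ℤ) ≤ (p.parts a : ℤ) := by exact_mod_cast h1
            omega
          · intro hia
            have h1 : i' ≤ a - 1 := by omega
            have h2 := p.parts_antitone h1
            have h3 : (n + a - 1 : ℤ) < (p.parts i' : ℤ) := by
              have : (p.parts (a-1) : ℤ) ≤ (p.parts i' : ℤ) := by exact_mod_cast h2
              rw [hcast] at hi'
              omega
            rw [← hj] at h3
            exact_mod_cast h3
        have hub : p.conj (n + a - 1).toNat ≤ a := by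
          by_contra hc
          push_neg at hc
          exact absurd ((hlt a).1 hc) (lt_irrefl a)
        have hlb : a - 1 < p.conj (n + a - 1).toNat := (hlt (a-1)).2 (by omega)
        omega
      rw [cg, hconj, hj]
      ring

end YPartition

namespace YPartition

variable (p : YPartition)

/-- The bead set of `p`. -/
def beads (p : YPartition) : Set ℤ := {n | ∃ i, p.g i = n}

lemma bead_iff (n : ℤ) : n ∈ p.beads ↔ ∀ j, p.cg j ≠ 1 - n := by
  constructor
  · rintro ⟨i, hi⟩ j hj
    exact p.g_add_cg_ne_one i j (by omega)
  · intro hj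
    rcases p.tot n with h | ⟨j, hjj⟩
    · exact h
    · exact absurd hjj (hj j)

lemma cbead_iff (n : ℤ) : (∃ j, p.cg j = n) ↔ (1 - n) ∉ p.beads := by
  rw [bead_iff]
  push_neg
  constructor
  · rintro ⟨j, hj⟩; exact ⟨j, by omega⟩
  · rintro ⟨j, hj⟩; exact ⟨j, by omega⟩

lemma selfConj_iff : p.IsSelfConjugate ↔ ∀ n : ℤ, (n ∈ p.beads ↔ (1 - n) ∉ p.beads) := by
  constructor
  · intro hsc n
    have hcg : ∀ j, p.cg j = p.g j := by
      intro j; simp [cg, g, hsc j]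
    rw [bead_iff]
    constructor
    · rintro h ⟨i, hi⟩
      exact (h i) (by rw [hcg] at *; omega)
    · intro h j hj
      exact h ⟨j, by rw [hcg] at hj; omega⟩
  · intro hsym j
    have hr : ∀ n : ℤ, (∃ i, p.cg i = n) ↔ (∃ i, p.g i = n) := by
      intro n
      rw [cbead_iff]
      exact ⟨fun h => (hsym n).2 h, fun h => (hsym n).1 h⟩
    have := strictAnti_range_eq p.cg_strictAnti p.g_strictAnti hr j
    simp only [cg, g] at this
    omega

lemma hook_eq (i j : ℕ) (hij : j < p.parts i) :
    (p.hook i j : ℤ) = (p.parts i : ℤ) + p.conj j - i - j - 1 ∧ 1 ≤ p.hook i j := by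
  have h2 := (p.lt_conj_iff i j).2 hij
  unfold hook
  constructor <;> [push_cast; skip] <;> omega

lemma core_iff (t : ℕ) : p.IsCore t ↔ ∀ n ∈ p.beads, n - t ∈ p.beads := by
  constructor
  · rintro hcore n ⟨i, hi⟩
    by_contra hc
    rw [bead_iff] at hc
    push_neg at hc
    obtain ⟨j, hj⟩ := hc
    -- cg j = 1 - (n - t)
    by_cases hij : j < p.parts i
    · have hkey := (p.lt_conj_iff i j).2 hij
      have hht : p.hook i j = t := by
        unfold hook
        simp only [g] at hi
        simp only [cg] at hj
        omega
      exact hcore i j hij (hht ▸ dvd_refl t)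
    · push_neg at hij
      have hkey : ¬ i < p.conj j := fun hc' => absurd ((p.lt_conj_iff i j).1 hc') (by omega)
      push_neg at hkey
      simp only [g] at hi
      simp only [cg] at hj
      have h1 : (p.parts i : ℤ) ≤ j := by exact_mod_cast hij
      have h2 : (p.conj j : ℤ) ≤ i := by exact_mod_cast hkey
      have h3 : (t : ℤ) ≥ 0 := Int.ofNat_nonneg t
      omega
  · intro hcl i j hij hdvd
    obtain ⟨hhe, hh1⟩ := p.hook_eq i j hij
    have hiter : ∀ k : ℕ, p.g i - k * t ∈ p.beads := by
      intro k
      induction k with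
      | zero => simpa using ⟨i, rfl⟩
      | succ k IH =>
        have := hcl _ IH
        have he : p.g i - (k + 1 : ℕ) * t = p.g i - k * t - t := by push_cast; ring
        rwa [he]
    obtain ⟨k, hk⟩ := hdvd
    have hbead := hiter k
    rw [bead_iff] at hbead
    have hkey := (p.lt_conj_iff i j).2 hij
    apply hbead j
    simp only [g, cg] at *
    have hcast : (p.hook i j : ℤ) = (t : ℤ) * k := by exact_mod_cast hk
    have hmul : (t : ℤ) * k = (k : ℤ) * t := mul_comm _ _
    push_cast
    omega

end YPartition

section Construction

open Classical in
noncomputable def zmax (T : Set ℤ) : ℤ :=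
  if h : (∃ z, z ∈ T) ∧ (∃ b : ℤ, ∀ z ∈ T, z ≤ b) then
    Classical.choose (Int.exists_greatest_of_bdd
      (by obtain ⟨b, hb⟩ := h.2; exact ⟨b, fun z hz => hb z hz⟩) h.1)
  else 0

open Classical in
lemma zmax_spec {T : Set ℤ} (h1 : ∃ z, z ∈ T) (h2 : ∃ b : ℤ, ∀ z ∈ T, z ≤ b) :
    zmax T ∈ T ∧ ∀ z ∈ T, z ≤ zmax T := by
  rw [zmax, dif_pos ⟨h1, h2⟩]
  have := Classical.choose_spec (Int.exists_greatest_of_bdd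
      (by obtain ⟨b, hb⟩ := (⟨h1, h2⟩ : _ ∧ _).2; exact ⟨b, fun z hz => hb z hz⟩)
      (⟨h1, h2⟩ : _ ∧ _).1)
  exact ⟨this.1, fun z hz => this.2 z hz⟩

variable (S : Set ℤ)

noncomputable def gSeq : ℕ → ℤ
  | 0 => zmax S
  | n + 1 => zmax {x ∈ S | x < gSeq n}

variable {S}

lemma S_nonempty (hlo : ∃ B : ℤ, ∀ n ≤ B, n ∈ S) : ∃ z, z ∈ S := by
  obtain ⟨B, hB⟩ := hlo; exact ⟨B, hB B le_rfl⟩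

lemma step_nonempty (hlo : ∃ B : ℤ, ∀ n ≤ B, n ∈ S) (c : ℤ) : ∃ z, z ∈ {x ∈ S | x < c} := by
  obtain ⟨B, hB⟩ := hlo
  refine ⟨min B (c - 1), ⟨hB _ (min_le_left _ _), ?_⟩⟩
  have := min_le_right B (c - 1)
  omega

lemma step_bdd (hb : ∃ B : ℤ, ∀ n ∈ S, n ≤ B) (c : ℤ) : ∃ b : ℤ, ∀ z ∈ {x ∈ S | x < c}, z ≤ b := by
  obtain ⟨B, hB⟩ := hb; exact ⟨B, fun z hz => hB z hz.1⟩

lemma gSeq_zero_spec (hb : ∃ B : ℤ, ∀ n ∈ S, n ≤ B) (hlo : ∃ B : ℤ, ∀ n ≤ B, n ∈ S) : zmax S ∈ S ∧ ∀ z ∈ S, z ≤ zmax S :=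
  zmax_spec (S_nonempty hlo) hb

lemma gSeq_succ_spec (hb : ∃ B : ℤ, ∀ n ∈ S, n ≤ B) (hlo : ∃ B : ℤ, ∀ n ≤ B, n ∈ S) (n : ℕ) :
    (gSeq S (n+1) ∈ S ∧ gSeq S (n+1) < gSeq S n) ∧
      ∀ z ∈ S, z < gSeq S n → z ≤ gSeq S (n+1) := by
  have h := zmax_spec (step_nonempty hlo (gSeq S n)) (step_bdd hb (gSeq S n))
  exact ⟨⟨h.1.1, h.1.2⟩, fun z hz hlt => h.2 z ⟨hz, hlt⟩⟩

lemma gSeq_mem (hb : ∃ B : ℤ, ∀ n ∈ S, n ≤ B) (hlo : ∃ B : ℤ, ∀ n ≤ B, n ∈ S) : ∀ n, gSeq S n ∈ S := by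
  intro n
  cases n with
  | zero => exact (gSeq_zero_spec hb hlo).1
  | succ n => exact ((gSeq_succ_spec hb hlo n).1).1

lemma gSeq_strictAnti (hb : ∃ B : ℤ, ∀ n ∈ S, n ≤ B) (hlo : ∃ B : ℤ, ∀ n ≤ B, n ∈ S) : StrictAnti (gSeq S) := by
  apply strictAnti_nat_of_succ_lt
  intro n
  exact ((gSeq_succ_spec hb hlo n).1).2

open Classical in
noncomputable def idxS (S : Set ℤ) (x : ℤ) : ℕ :=
  ((Finset.Icc (x + 1) (zmax S)).filter (fun z => z ∈ S)).card

lemma gSeq_idx (hb : ∃ B : ℤ, ∀ n ∈ S, n ≤ B) (hlo : ∃ B : ℤ, ∀ n ≤ B, n ∈ S) : ∀ x ∈ S, gSeq S (idxS S x) = x := by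
  classical
  suffices H : ∀ k, ∀ x ∈ S, idxS S x = k → gSeq S k = x by
    intro x hx; exact H _ x hx rfl
  intro k
  induction k using Nat.strong_induction_on with
  | _ k IH =>
    intro x hx hk
    have hzm := gSeq_zero_spec hb hlo
    rcases Nat.eq_zero_or_pos k with rfl | hkpos
    · have hF : ((Finset.Icc (x + 1) (zmax S)).filter (fun z => z ∈ S)) = ∅ :=
        Finset.card_eq_zero.1 (by rw [← hk]; rfl)
      have hub : ∀ z ∈ S, z ≤ x := by
        intro z hz
        by_contra hc
        push_neg at hc
        have hmem : z ∈ ((Finset.Icc (x + 1) (zmax S)).filter (fun z => z ∈ S)) := by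
          simp only [Finset.mem_filter, Finset.mem_Icc]
          exact ⟨⟨by omega, hzm.2 z hz⟩, hz⟩
        rw [hF] at hmem
        simp at hmem
      have h1 : gSeq S 0 = zmax S := rfl
      have h2 : zmax S ≤ x := hub _ hzm.1
      have h3 : x ≤ zmax S := hzm.2 x hx
      omega
    · set F := ((Finset.Icc (x + 1) (zmax S)).filter (fun z => z ∈ S)) with hFdef
      have hkF : F.card = k := hk
      have hne : F.Nonempty := by
        rw [← Finset.card_pos, hkF]; exact hkpos
      set y := F.min' hne with hy
      have hyF : y ∈ F := F.min'_mem hne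
      have hyS : y ∈ S := (Finset.mem_filter.1 hyF).2
      have hyIcc := (Finset.mem_filter.1 hyF).1
      rw [Finset.mem_Icc] at hyIcc
      have hidxy : idxS S y = k - 1 := by
        have hFy : ((Finset.Icc (y + 1) (zmax S)).filter (fun z => z ∈ S)) = F.erase y := by
          ext z
          simp only [Finset.mem_filter, Finset.mem_Icc, Finset.mem_erase, hFdef]
          constructor
          · rintro ⟨⟨hz1, hz2⟩, hzS⟩
            exact ⟨by omega, ⟨by omega, hz2⟩, hzS⟩
          · rintro ⟨hzy, ⟨hz1, hz2⟩, hzS⟩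
            have : y ≤ z := F.min'_le z (by
              simp only [hFdef, Finset.mem_filter, Finset.mem_Icc]
              exact ⟨⟨hz1, hz2⟩, hzS⟩)
            exact ⟨⟨by omega, hz2⟩, hzS⟩
        rw [idxS, hFy, Finset.card_erase_of_mem hyF, hkF]
      have hgy : gSeq S (k-1) = y := IH (k-1) (by omega) y hyS hidxy
      have hk1 : k = (k-1) + 1 := by omega
      rw [hk1]
      have hspec := zmax_spec (step_nonempty hlo (gSeq S (k-1))) (step_bdd hb (gSeq S (k-1)))
      have hxset : x ∈ {z ∈ S | z < gSeq S (k-1)} := by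
        simp only [Set.mem_setOf_eq, hgy]
        exact ⟨hx, by omega⟩
      have hgk : gSeq S ((k-1)+1) = zmax {z ∈ S | z < gSeq S (k-1)} := rfl
      have hub : ∀ z ∈ S, z < y → z ≤ x := by
        intro z hz hzy
        by_contra hc
        push_neg at hc
        have hzF : z ∈ F := by
          simp only [hFdef, Finset.mem_filter, Finset.mem_Icc]
          exact ⟨⟨by omega, hzm.2 z hz⟩, hz⟩
        have := F.min'_le z hzF
        omega
      rw [hgk]
      have h1 := hspec.1
      have h2 := hspec.2 x hxset
      have h3 : zmax {z ∈ S | z < gSeq S (k-1)} ≤ x := by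
        obtain ⟨hm1, hm2⟩ := h1
        exact hub _ hm1 (by omega)
      omega

lemma idx_gSeq (hb : ∃ B : ℤ, ∀ n ∈ S, n ≤ B) (hlo : ∃ B : ℤ, ∀ n ≤ B, n ∈ S) : ∀ i : ℕ, idxS S (gSeq S i) = i := by
  classical
  intro i
  induction i with
  | zero =>
    rw [idxS]
    have : Finset.Icc (gSeq S 0 + 1) (zmax S) = ∅ := by
      apply Finset.Icc_eq_empty
      have : gSeq S 0 = zmax S := rfl
      omega
    rw [this]
    simp
  | succ i IH =>
    have hspec := gSeq_succ_spec hb hlo i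
    have hzm := gSeq_zero_spec hb hlo
    have hins : ((Finset.Icc (gSeq S (i+1) + 1) (zmax S)).filter (fun z => z ∈ S))
        = insert (gSeq S i) ((Finset.Icc (gSeq S i + 1) (zmax S)).filter (fun z => z ∈ S)) := by
      ext z
      simp only [Finset.mem_filter, Finset.mem_Icc, Finset.mem_insert]
      constructor
      · rintro ⟨⟨hz1, hz2⟩, hzS⟩
        rcases lt_trichotomy z (gSeq S i) with h | h | h
        · have := hspec.2 z hzS h
          omega
        · exact Or.inl h
        · exact Or.inr ⟨⟨by omega, hz2⟩, hzS⟩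
      · rintro (rfl | ⟨⟨hz1, hz2⟩, hzS⟩)
        · exact ⟨⟨by have := hspec.1.2; omega, hzm.2 _ (gSeq_mem hb hlo i)⟩, gSeq_mem hb hlo i⟩
        · have := hspec.1.2
          exact ⟨⟨by omega, hz2⟩, hzS⟩
    rw [idxS, hins, Finset.card_insert_of_notMem, ← idxS, IH]
    simp only [Finset.mem_filter, Finset.mem_Icc]
    intro hmem
    omega

open Classical in
lemma charge_count (hsym : ∀ n : ℤ, n ∈ S ↔ (1 - n) ∉ S) (x : ℤ) (hx : x < 0) :
    ((Finset.Icc (x + 1) (-x)).filter (fun z => z ∈ S)).card = (-x).toNat := by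
  classical
  set I := Finset.Icc (x + 1) (-x) with hI
  have hcard : I.card = (-2 * x).toNat := by
    rw [hI, Int.card_Icc]
    congr 1
    ring
  have hsplit := Finset.card_filter_add_card_filter_not
    (s := I) (p := fun z => z ∈ S)
  have hbij : (I.filter (fun z => z ∈ S)).card = (I.filter (fun z => ¬ z ∈ S)).card := by
    apply Finset.card_nbij (i := fun n => 1 - n)
    · intro a ha
      simp only [Finset.mem_coe, Finset.mem_filter, Finset.mem_Icc, hI] at ha ⊢
      obtain ⟨⟨ha1, ha2⟩, haS⟩ := ha
      exact ⟨⟨by omega, by omega⟩, (hsym a).1 haS⟩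
    · intro a _ b _ hab
      simp only at hab
      omega
    · intro b hbmem
      simp only [Finset.coe_filter, Finset.mem_Icc, Set.mem_setOf_eq, hI] at hbmem ⊢
      obtain ⟨⟨hb1, hb2⟩, hbS⟩ := hbmem
      refine ⟨1 - b, ⟨⟨by omega, by omega⟩, ?_⟩, by simp⟩
      rw [hsym (1 - b)]
      simpa using hbS
  omega

lemma idx_charge_ge (hb : ∃ B : ℤ, ∀ n ∈ S, n ≤ B) (hlo : ∃ B : ℤ, ∀ n ≤ B, n ∈ S) (hsym : ∀ n : ℤ, n ∈ S ↔ (1 - n) ∉ S) : ∀ x ∈ S, -x ≤ (idxS S x : ℤ) := by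
  classical
  intro x hx
  rcases le_or_gt 0 x with h | h
  · have : (0:ℤ) ≤ (idxS S x : ℤ) := Int.ofNat_nonneg _
    omega
  · have hsub : ((Finset.Icc (x + 1) (-x)).filter (fun z => z ∈ S)) ⊆
        ((Finset.Icc (x + 1) (zmax S)).filter (fun z => z ∈ S)) := by
      intro z hz
      simp only [Finset.mem_filter, Finset.mem_Icc] at hz ⊢
      exact ⟨⟨hz.1.1, (gSeq_zero_spec hb hlo).2 z hz.2⟩, hz.2⟩
    have hle := Finset.card_le_card hsub
    rw [charge_count hsym x h] at hle
    rw [idxS] at *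
    omega

lemma gSeq_add_nonneg (hb : ∃ B : ℤ, ∀ n ∈ S, n ≤ B) (hlo : ∃ B : ℤ, ∀ n ≤ B, n ∈ S) (hsym : ∀ n : ℤ, n ∈ S ↔ (1 - n) ∉ S) : ∀ i : ℕ, 0 ≤ gSeq S i + i := by
  intro i
  have h1 := idx_charge_ge hb hlo hsym (gSeq S i) (gSeq_mem hb hlo i)
  rw [idx_gSeq hb hlo i] at h1
  omega

lemma gSeq_eventual (hb : ∃ B : ℤ, ∀ n ∈ S, n ≤ B) (hlo : ∃ B : ℤ, ∀ n ≤ B, n ∈ S) (hsym : ∀ n : ℤ, n ∈ S ↔ (1 - n) ∉ S) : ∃ N : ℕ, ∀ i : ℕ, N ≤ i → gSeq S i = -(i:ℤ) := by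
  classical
  obtain ⟨Bl, hBspec⟩ := hlo
  have hlo' : ∃ B : ℤ, ∀ n ≤ B, n ∈ S := ⟨Bl, hBspec⟩
  refine ⟨(max (-Bl) (zmax S)).toNat + 1, fun i hi => ?_⟩
  have hto : (max (-Bl) (zmax S)) ≤ ((max (-Bl) (zmax S)).toNat : ℤ) := Int.self_le_toNat _
  have hiZ : (max (-Bl) (zmax S)) + 1 ≤ (i:ℤ) := by
    have h1 : ((max (-Bl) (zmax S)).toNat + 1 : ℕ) ≤ i := hi
    have h2 := Int.ofNat_le.2 h1
    push_cast at h2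
    omega
  have hmax1 : -Bl ≤ max (-Bl) (zmax S) := le_max_left _ _
  have hmax2 : zmax S ≤ max (-Bl) (zmax S) := le_max_right _ _
  have hipos : 1 ≤ i := le_trans (by omega) hi
  have hiposZ : (1:ℤ) ≤ (i:ℤ) := by exact_mod_cast hipos
  have hxS : (-(i:ℤ)) ∈ S := hBspec (-(i:ℤ)) (by omega)
  have hidx : idxS S (-(i:ℤ)) = i := by
    rw [idxS]
    have hone : ((Finset.Icc (-(i:ℤ) + 1) (zmax S)).filter (fun z => z ∈ S))
        = ((Finset.Icc (-(i:ℤ) + 1) (-(-(i:ℤ)))).filter (fun z => z ∈ S)) := by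
      ext z
      simp only [Finset.mem_filter, Finset.mem_Icc, neg_neg]
      constructor
      · rintro ⟨⟨h1, h2⟩, hz⟩
        exact ⟨⟨h1, by omega⟩, hz⟩
      · rintro ⟨⟨h1, h2⟩, hz⟩
        exact ⟨⟨h1, (gSeq_zero_spec hb hlo').2 z hz⟩, hz⟩
    rw [hone, charge_count hsym _ (by omega)]
    omega
  have hfin := gSeq_idx hb hlo' (-(i:ℤ)) hxS
  rw [hidx] at hfin
  exact hfin

lemma gSeq_addmono (hb : ∃ B : ℤ, ∀ n ∈ S, n ≤ B) (hlo : ∃ B : ℤ, ∀ n ≤ B, n ∈ S) : Antitone (fun n : ℕ => gSeq S n + n) := by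
  apply antitone_nat_of_succ_le
  intro n
  have := (gSeq_succ_spec hb hlo n).1.2
  push_cast
  omega

noncomputable def ofSet (hb : ∃ B : ℤ, ∀ n ∈ S, n ≤ B) (hlo : ∃ B : ℤ, ∀ n ≤ B, n ∈ S) (hsym : ∀ n : ℤ, n ∈ S ↔ (1 - n) ∉ S) : YPartition where
  parts i := (gSeq S i + i).toNat
  antitone := by
    intro i j hij
    exact Int.toNat_le_toNat (gSeq_addmono hb hlo hij)
  support_finite := by
    obtain ⟨N, hN⟩ := gSeq_eventual hb hlo hsym
    exact ⟨N, fun i hi => by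
      show (gSeq S i + (i:ℤ)).toNat = 0
      rw [hN i hi]
      simp⟩

lemma ofSet_g (hb : ∃ B : ℤ, ∀ n ∈ S, n ≤ B) (hlo : ∃ B : ℤ, ∀ n ≤ B, n ∈ S) (hsym : ∀ n : ℤ, n ∈ S ↔ (1 - n) ∉ S) (i : ℕ) : (ofSet hb hlo hsym).g i = gSeq S i := by
  have h := gSeq_add_nonneg hb hlo hsym i
  simp only [YPartition.g, ofSet]
  rw [Int.toNat_of_nonneg h]
  ring

lemma ofSet_beads (hb : ∃ B : ℤ, ∀ n ∈ S, n ≤ B) (hlo : ∃ B : ℤ, ∀ n ≤ B, n ∈ S) (hsym : ∀ n : ℤ, n ∈ S ↔ (1 - n) ∉ S) : (ofSet hb hlo hsym).beads = S := by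
  ext n
  constructor
  · rintro ⟨i, hi⟩
    rw [ofSet_g hb hlo hsym i] at hi
    rw [← hi]
    exact gSeq_mem hb hlo i
  · intro hn
    exact ⟨idxS S n, by rw [ofSet_g hb hlo hsym, gSeq_idx hb hlo n hn]⟩

end Construction

section Caps

variable {S : Set ℤ}

noncomputable def cap (s : ℕ) (S : Set ℤ) (x : ℤ) : ℤ := zmax {n ∈ S | (s:ℤ) ∣ (n - x)}

lemma cap_spec (s : ℕ) (hs : 0 < s) (hb : ∃ B : ℤ, ∀ n ∈ S, n ≤ B)
    (hlo : ∃ B : ℤ, ∀ n ≤ B, n ∈ S) (x : ℤ) :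
    (cap s S x ∈ S ∧ (s:ℤ) ∣ (cap s S x - x)) ∧
      ∀ n ∈ S, (s:ℤ) ∣ (n - x) → n ≤ cap s S x := by
  obtain ⟨Bl, hBl⟩ := hlo
  obtain ⟨B, hB⟩ := hb
  have hne : ∃ z, z ∈ {n ∈ S | (s:ℤ) ∣ (n - x)} := by
    refine ⟨x - s * (x - Bl).toNat, ⟨hBl _ ?_, ⟨-(x - Bl).toNat, by ring⟩⟩⟩
    have h1 : (x - Bl) ≤ ((x - Bl).toNat : ℤ) := Int.self_le_toNat _
    have h2 : (0:ℤ) ≤ ((x - Bl).toNat : ℤ) := Int.ofNat_nonneg _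
    have h3 : ((x - Bl).toNat : ℤ) ≤ (s:ℤ) * ((x - Bl).toNat : ℤ) := by
      nlinarith [show (1:ℤ) ≤ (s:ℤ) from by exact_mod_cast hs]
    omega
  have hbdd : ∃ b : ℤ, ∀ z ∈ {n ∈ S | (s:ℤ) ∣ (n - x)}, z ≤ b :=
    ⟨B, fun z hz => hB z hz.1⟩
  have h := zmax_spec hne hbdd
  exact ⟨⟨h.1.1, h.1.2⟩, fun n hn hd => h.2 n ⟨hn, hd⟩⟩

lemma cap_congr (s : ℕ) (x y : ℤ) (hxy : (s:ℤ) ∣ (x - y)) : cap s S x = cap s S y := by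
  have : {n ∈ S | (s:ℤ) ∣ (n - x)} = {n ∈ S | (s:ℤ) ∣ (n - y)} := by
    ext n
    simp only [Set.mem_setOf_eq, and_congr_right_iff]
    intro _
    constructor
    · intro h
      have := dvd_add h hxy
      simpa [sub_add_sub_cancel] using this
    · intro h
      have := dvd_sub h hxy
      have h2 : n - y - (x - y) = n - x := by ring
      rwa [h2] at this
  rw [cap, cap, this]

lemma descend (s : ℕ) (hclos : ∀ n ∈ S, n - s ∈ S) :
    ∀ k : ℕ, ∀ m ∈ S, m - s * k ∈ S := by
  intro k
  induction k with
  | zero => intro m hm; simpa using hm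
  | succ k IH =>
    intro m hm
    have h1 := hclos _ (IH m hm)
    have h2 : m - s * k - s = m - s * (k + 1 : ℕ) := by push_cast; ring
    rwa [h2] at h1

lemma mem_iff_le_cap (s : ℕ) (hs : 0 < s) (hb : ∃ B : ℤ, ∀ n ∈ S, n ≤ B)
    (hlo : ∃ B : ℤ, ∀ n ≤ B, n ∈ S) (hclos : ∀ n ∈ S, n - s ∈ S) (n : ℤ) :
    n ∈ S ↔ n ≤ cap s S n := by
  have h := cap_spec s hs hb hlo n
  constructor
  · intro hn
    exact h.2 n hn (dvd_sub_comm.1 ⟨0, by ring⟩)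
  · intro hle
    obtain ⟨k, hk⟩ := h.1.2
    have hk0 : 0 ≤ k := by nlinarith [show (0:ℤ) < (s:ℤ) from by exact_mod_cast hs]
    have := descend s hclos k.toNat (cap s S n) h.1.1
    have he : cap s S n - s * (k.toNat : ℤ) = n := by
      rw [Int.toNat_of_nonneg hk0]
      omega
    rwa [he] at this

lemma capsum (s : ℕ) (hs : 0 < s) (hb : ∃ B : ℤ, ∀ n ∈ S, n ≤ B)
    (hlo : ∃ B : ℤ, ∀ n ≤ B, n ∈ S) (hsym : ∀ n : ℤ, n ∈ S ↔ (1 - n) ∉ S)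
    (hclos : ∀ n ∈ S, n - s ∈ S) (x : ℤ) :
    cap s S x + cap s S (1 - x) = 1 - s := by
  have hsZ : (0:ℤ) < s := by exact_mod_cast hs
  have h := cap_spec s hs hb hlo x
  have h' := cap_spec s hs hb hlo (1 - x)
  set c := cap s S x with hc
  have h1 : c ∈ S := h.1.1
  have hdx : (s:ℤ) ∣ (c - x) := h.1.2
  have h2 : 1 - c ∉ S := (hsym c).1 h1
  have hlt : cap s S (1 - x) < 1 - c := by
    by_contra hcon
    push_neg at hcon
    apply h2
    rw [mem_iff_le_cap s hs hb hlo hclos]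
    have hcg : cap s S (1 - c) = cap s S (1 - x) := by
      apply cap_congr
      have : (1 - c) - (1 - x) = -(c - x) := by ring
      rw [this]
      exact dvd_neg.2 hdx
    rw [hcg]
    exact hcon
  have h3 : c + s ∉ S := by
    intro hcon
    have := h.2 (c + s) hcon (by
      have : c + s - x = (c - x) + s := by ring
      rw [this]
      exact dvd_add hdx ⟨1, by ring⟩)
    omega
  have h4 : 1 - (c + s) ∈ S := by
    have := (hsym (1 - (c + s))).2
    apply this
    intro hcon
    apply h3
    have he : 1 - (1 - (c + s)) = c + s := by ring
    rwa [he] at hcon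
  have h5 : 1 - (c + s) ≤ cap s S (1 - x) := by
    apply h'.2 _ h4
    have : 1 - (c + s) - (1 - x) = -((c - x) + s) := by ring
    rw [this]
    exact dvd_neg.2 (dvd_add hdx ⟨1, by ring⟩)
  have hd : (s:ℤ) ∣ (c + cap s S (1 - x) - (1 - s)) := by
    have d2 := h'.1.2
    have he : c + cap s S (1 - x) - (1 - s) = (c - x) + (cap s S (1 - x) - (1 - x)) + s := by ring
    rw [he]
    exact dvd_add (dvd_add hdx d2) ⟨1, by ring⟩
  have := dvd_small hsZ hd (by omega) (by omega)
  omega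

lemma capstep (s : ℕ) (hs : 0 < s) (hb : ∃ B : ℤ, ∀ n ∈ S, n ≤ B)
    (hlo : ∃ B : ℤ, ∀ n ≤ B, n ∈ S) (hclos1 : ∀ n ∈ S, n - s - 1 ∈ S) (x : ℤ) :
    cap s S x ≤ cap s S (x - 1) + s + 1 := by
  have h := cap_spec s hs hb hlo x
  have h' := cap_spec s hs hb hlo (x - 1)
  have h1 : cap s S x - s - 1 ∈ S := hclos1 _ h.1.1
  have h2 := h'.2 _ h1 (by
    have he : cap s S x - s - 1 - (x - 1) = (cap s S x - x) - s := by ring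
    rw [he]
    exact dvd_sub h.1.2 ⟨1, by ring⟩)
  omega

/-- The `N`-vector of a bead set. -/
noncomputable def Nv (s : ℕ) (S : Set ℤ) (r : ℕ) : ℤ := (cap s S (r:ℤ) - r) / s + 1

lemma cap_eq_Nv (s : ℕ) (hs : 0 < s) (hb : ∃ B : ℤ, ∀ n ∈ S, n ≤ B)
    (hlo : ∃ B : ℤ, ∀ n ≤ B, n ∈ S) (r : ℕ) :
    cap s S (r:ℤ) = (r:ℤ) + (s:ℤ) * (Nv s S r - 1) := by
  have h := (cap_spec s hs hb hlo (r:ℤ)).1.2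
  rw [Nv]
  have := Int.ediv_mul_cancel h
  nlinarith [this]

end Caps

section NvCond

variable {S : Set ℤ}

lemma Nv_anti (s : ℕ) (hs : 0 < s) (hb : ∃ B : ℤ, ∀ n ∈ S, n ≤ B)
    (hlo : ∃ B : ℤ, ∀ n ≤ B, n ∈ S) (hsym : ∀ n : ℤ, n ∈ S ↔ (1 - n) ∉ S) (hclos : ∀ n ∈ S, n - s ∈ S)
    (r : ℕ) (h1 : 1 ≤ r) (h2 : r ≤ s) : Nv s S r + Nv s S (s + 1 - r) = 0 := by
  have hsZ : (0:ℤ) < s := by exact_mod_cast hs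
  have hsum := capsum s hs hb hlo hsym hclos (r:ℤ)
  have hcast : ((s + 1 - r : ℕ) : ℤ) = (s:ℤ) + 1 - r := by omega
  have e1 := cap_eq_Nv s hs hb hlo r
  have e2 := cap_eq_Nv s hs hb hlo (s + 1 - r)
  have hcg : cap s S ((s + 1 - r : ℕ) : ℤ) = cap s S (1 - (r:ℤ)) := by
    apply cap_congr
    rw [hcast]
    exact ⟨1, by ring⟩
  rw [hcg, hcast] at e2
  have hz : (s:ℤ) * (Nv s S r + Nv s S (s + 1 - r)) = 0 := by
    linear_combination hsum - e1 - e2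
  rcases mul_eq_zero.1 hz with h | h
  · omega
  · exact h

lemma Nv_step (s : ℕ) (hs : 0 < s) (hb : ∃ B : ℤ, ∀ n ∈ S, n ≤ B)
    (hlo : ∃ B : ℤ, ∀ n ≤ B, n ∈ S) (hclos1 : ∀ n ∈ S, n - s - 1 ∈ S)
    (r : ℕ) (h1 : 2 ≤ r) (h2 : r ≤ s) : Nv s S r ≤ Nv s S (r - 1) + 1 := by
  have hsZ : (0:ℤ) < s := by exact_mod_cast hs
  have hstep := capstep s hs hb hlo hclos1 (r:ℤ)
  have hcast : ((r - 1 : ℕ) : ℤ) = (r:ℤ) - 1 := by omega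
  have e1 := cap_eq_Nv s hs hb hlo r
  have e2 := cap_eq_Nv s hs hb hlo (r - 1)
  rw [hcast] at e2
  have key : (s:ℤ) * Nv s S r ≤ (s:ℤ) * (Nv s S (r - 1) + 1) := by nlinarith
  exact le_of_mul_le_mul_left key hsZ

lemma Nv_one (s : ℕ) (hs : 0 < s) (hb : ∃ B : ℤ, ∀ n ∈ S, n ≤ B)
    (hlo : ∃ B : ℤ, ∀ n ≤ B, n ∈ S) (hsym : ∀ n : ℤ, n ∈ S ↔ (1 - n) ∉ S) (hclos : ∀ n ∈ S, n - s ∈ S)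
    (hclos1 : ∀ n ∈ S, n - s - 1 ∈ S) : Nv s S 1 ≤ 1 := by
  have hsZ : (0:ℤ) < s := by exact_mod_cast hs
  have hsum := capsum s hs hb hlo hsym hclos (1:ℤ)
  have hstep := capstep s hs hb hlo hclos1 (1:ℤ)
  have hc1 : cap s S (1:ℤ) ≤ 1 := by
    have h0 : (1:ℤ) - 1 = 0 := by ring
    rw [h0] at hsum hstep
    omega
  have e1 := cap_eq_Nv s hs hb hlo 1
  rw [Nat.cast_one] at e1
  nlinarith

end NvCond

section Pchain

lemma pchain (s u : ℕ) (hu : u = s / 2) (N : ℕ → ℤ)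
    (hanti : ∀ r, 1 ≤ r → r ≤ s → N r + N (s + 1 - r) = 0)
    (hstep : ∀ r, 2 ≤ r → r ≤ s → N r ≤ N (r - 1) + 1)
    (hone : N 1 ≤ 1) :
    ∀ i, 1 ≤ i → i ≤ u → 0 ≤ (i:ℤ) - N i ∧ (i:ℤ) - N i ≤ (s:ℤ) - u := by
  have hus : u ≤ s := by omega
  have hchain : ∀ j, ∀ i, 1 ≤ i → i ≤ j → j ≤ u → (i:ℤ) - N i ≤ (j:ℤ) - N j := by
    intro j
    induction j with
    | zero => intro i h1 h2 _; omega
    | succ j IH =>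
      intro i h1 h2 h3
      rcases Nat.eq_or_lt_of_le h2 with rfl | hlt
      · exact le_rfl
      · have hij : i ≤ j := by omega
        have hstep' := hstep (j + 1) (by omega) (by omega)
        have hj1 : (j + 1) - 1 = j := by omega
        rw [hj1] at hstep'
        have := IH i h1 hij (by omega)
        push_cast
        push_cast at this
        omega
  intro i h1 h2
  have hP1 : (0:ℤ) ≤ (1:ℕ) - N 1 := by push_cast; omega
  have hPu : (u:ℤ) - N u ≤ (s:ℤ) - u := by
    have h2u : 2 * u = s ∨ 2 * u + 1 = s := by omega
    rcases h2u with h2u | h2u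
    · have hanti' := hanti u (by omega) (by omega)
      have hmid : s + 1 - u = u + 1 := by omega
      rw [hmid] at hanti'
      have hstep' := hstep (u + 1) (by omega) (by omega)
      have hj1 : (u + 1) - 1 = u := by omega
      rw [hj1] at hstep'
      have hsu : (s:ℤ) = 2 * u := by exact_mod_cast h2u.symm
      omega
    · have hanti' := hanti (u + 1) (by omega) (by omega)
      have hmid : s + 1 - (u + 1) = u + 1 := by omega
      rw [hmid] at hanti'
      have hstep' := hstep (u + 1) (by omega) (by omega)
      have hj1 : (u + 1) - 1 = u := by omega
      rw [hj1] at hstep'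
      have hsu : (s:ℤ) = 2 * u + 1 := by exact_mod_cast h2u.symm
      omega
  constructor
  · calc (0:ℤ) ≤ (1:ℕ) - N 1 := hP1
    _ ≤ (i:ℤ) - N i := hchain i 1 le_rfl h1 (by omega)
  · calc (i:ℤ) - N i ≤ (u:ℤ) - N u := hchain u i h1 h2 le_rfl
    _ ≤ (s:ℤ) - u := hPu

end Pchain

section Wside

variable (s u : ℕ)

/-- Total extension of `w : Fin u → Fin s` to `ℕ`. -/
noncomputable def wext (s u : ℕ) (w : Fin u → Fin s) (k : ℕ) : ℕ :=
  if h : k < u then (w ⟨k, h⟩ : ℕ) else s + k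

variable {s u}

lemma wext_succ {w : Fin u → Fin s} (hw : StrictMono w) (n : ℕ) :
    wext s u w n < wext s u w (n + 1) := by
  by_cases h1 : n + 1 < u
  · have h0 : n < u := by omega
    rw [wext, dif_pos h0, wext, dif_pos h1]
    exact hw (by simp [Fin.lt_def])
  · by_cases h0 : n < u
    · rw [wext, dif_pos h0, wext, dif_neg h1]
      have := (w ⟨n, h0⟩).2
      omega
    · rw [wext, dif_neg h0, wext, dif_neg h1]
      omega

lemma wext_facts {w : Fin u → Fin s} (hw : StrictMono w) (hu0 : 0 < u) :
    ∀ k : ℕ, k < u → k ≤ wext s u w k ∧ wext s u w k + u ≤ s + k := by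
  have hadd := nat_smono_add (wext s u w) (wext_succ hw)
  intro k hk
  constructor
  · have h5 := hadd 0 k
    rw [Nat.zero_add] at h5
    omega
  · have h1 : k + (u - 1 - k) = u - 1 := by omega
    have := hadd k (u - 1 - k)
    rw [h1] at this
    have h2 : wext s u w (u - 1) ≤ s - 1 := by
      rw [wext, dif_pos (show u - 1 < u by omega)]
      have h3 := (w ⟨u - 1, by omega⟩).2
      omega
    have h4 : 1 ≤ s := by
      have := (w ⟨u - 1, by omega⟩).2
      omega
    omega

noncomputable def Pw (s u : ℕ) (w : Fin u → Fin s) (i : ℕ) : ℤ :=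
  if 1 ≤ i ∧ i ≤ u then ((wext s u w (i - 1) : ℕ) : ℤ) - (i - 1 : ℕ) else 0

lemma Pw_facts {w : Fin u → Fin s} (hw : StrictMono w) :
    (∀ i, 1 ≤ i → i ≤ u → 0 ≤ Pw s u w i ∧ Pw s u w i ≤ (s:ℤ) - u) ∧
    (∀ i, 1 ≤ i → i + 1 ≤ u → Pw s u w i ≤ Pw s u w (i + 1)) := by
  constructor
  · intro i h1 h2
    have hu0 : 0 < u := by omega
    obtain ⟨hge, hub⟩ := wext_facts hw hu0 (i - 1) (by omega)
    rw [Pw, if_pos ⟨h1, h2⟩]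
    push_cast
    omega
  · intro i h1 h2
    rw [Pw, if_pos ⟨h1, by omega⟩, Pw, if_pos (⟨by omega, h2⟩ : 1 ≤ i + 1 ∧ i + 1 ≤ u)]
    have hlt : wext s u w (i - 1) < wext s u w (i - 1 + 1) := wext_succ hw (i - 1)
    have he : i - 1 + 1 = i := by omega
    rw [he] at hlt
    have he2 : i + 1 - 1 = i := by omega
    rw [he2]
    push_cast
    omega

noncomputable def Nw (s u : ℕ) (w : Fin u → Fin s) (r : ℕ) : ℤ :=
  if 1 ≤ r ∧ r ≤ u then (r : ℤ) - Pw s u w r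
  else if 1 ≤ s + 1 - r ∧ s + 1 - r ≤ u ∧ r ≤ s then Pw s u w (s + 1 - r) - (s + 1 - r : ℕ)
  else 0

lemma Nw_lower {w : Fin u → Fin s} (r : ℕ) (h : 1 ≤ r ∧ r ≤ u) :
    Nw s u w r = (r : ℤ) - Pw s u w r := by rw [Nw, if_pos h]

lemma Nw_upper {w : Fin u → Fin s} (r : ℕ) (hno : ¬(1 ≤ r ∧ r ≤ u))
    (h : 1 ≤ s + 1 - r ∧ s + 1 - r ≤ u ∧ r ≤ s) :
    Nw s u w r = Pw s u w (s + 1 - r) - (s + 1 - r : ℕ) := by rw [Nw, if_neg hno, if_pos h]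

lemma Nw_mid {w : Fin u → Fin s} (r : ℕ) (hno : ¬(1 ≤ r ∧ r ≤ u))
    (hno2 : ¬(1 ≤ s + 1 - r ∧ s + 1 - r ≤ u ∧ r ≤ s)) :
    Nw s u w r = 0 := by rw [Nw, if_neg hno, if_neg hno2]

lemma Nw_anti {w : Fin u → Fin s} (hu : u = s / 2)
    (r : ℕ) (h1 : 1 ≤ r) (h2 : r ≤ s) : Nw s u w r + Nw s u w (s + 1 - r) = 0 := by
  have hus : 2 * u = s ∨ 2 * u + 1 = s := by omega
  have hqr : s + 1 - (s + 1 - r) = r := by omega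
  by_cases hr : r ≤ u
  · rw [Nw_lower r ⟨h1, hr⟩, Nw_upper (s + 1 - r) (by omega) (by omega), hqr]
    ring
  · by_cases hq : 1 ≤ s + 1 - r ∧ s + 1 - r ≤ u
    · rw [Nw_upper r (by omega) ⟨hq.1, hq.2, h2⟩, Nw_lower (s + 1 - r) hq]
      ring
    · -- middle : r = u + 1 = s + 1 - r  (s odd)
      rw [Nw_mid r (by omega) (by omega), Nw_mid (s + 1 - r) (by omega) (by omega)]
      ring

lemma Nw_step {w : Fin u → Fin s} (hw : StrictMono w) (hu : u = s / 2)
    (r : ℕ) (h1 : 2 ≤ r) (h2 : r ≤ s) : Nw s u w r ≤ Nw s u w (r - 1) + 1 := by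
  obtain ⟨hPb, hPm⟩ := Pw_facts hw
  have hus : 2 * u = s ∨ 2 * u + 1 = s := by omega
  by_cases hr : r ≤ u
  · rw [Nw_lower r ⟨by omega, hr⟩, Nw_lower (r - 1) ⟨by omega, by omega⟩]
    have := hPm (r - 1) (by omega) (by omega)
    have he : r - 1 + 1 = r := by omega
    rw [he] at this
    push_cast
    omega
  · by_cases hmidev : r = u + 1 ∧ 2 * u = s
    · obtain ⟨rfl, hev⟩ := hmidev
      have hu1 : 1 ≤ u := by omega
      rw [Nw_upper (u + 1) (by omega) (by omega), Nw_lower (u + 1 - 1) ⟨by omega, by omega⟩]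
      have hq : s + 1 - (u + 1) = u := by omega
      have hq2 : u + 1 - 1 = u := by omega
      rw [hq, hq2]
      have := hPb u (by omega) (by omega)
      have hsu : (s:ℤ) = 2 * u := by exact_mod_cast hev.symm
      omega
    · by_cases hmidodd : r = u + 1 ∧ 2 * u + 1 = s
      · obtain ⟨rfl, hodd⟩ := hmidodd
        have hu1 : 1 ≤ u := by omega
        rw [Nw_mid (u + 1) (by omega) (by omega), Nw_lower (u + 1 - 1) ⟨by omega, by omega⟩]
        have hq2 : u + 1 - 1 = u := by omega
        rw [hq2]
        have := hPb u (by omega) (by omega)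
        have hsu : (s:ℤ) = 2 * u + 1 := by exact_mod_cast hodd.symm
        omega
      · by_cases hmodd2 : r = u + 2 ∧ 2 * u + 1 = s
        · obtain ⟨rfl, hodd⟩ := hmodd2
          have hu1 : 1 ≤ u := by omega
          rw [Nw_upper (u + 2) (by omega) (by omega), Nw_mid (u + 2 - 1) (by omega) (by omega)]
          have hq : s + 1 - (u + 2) = u := by omega
          rw [hq]
          have := hPb u (by omega) (by omega)
          have hsu : (s:ℤ) = 2 * u + 1 := by exact_mod_cast hodd.symm
          omega
        · -- generic upper case : s + 1 - r ≤ u - 1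
          have hq1 : 1 ≤ s + 1 - r := by omega
          have hq2 : s + 1 - r + 1 ≤ u := by omega
          rw [Nw_upper r (by omega) ⟨by omega, by omega, h2⟩,
            Nw_upper (r - 1) (by omega) (by omega)]
          have := hPm (s + 1 - r) hq1 hq2
          have he : s + 1 - (r - 1) = (s + 1 - r) + 1 := by omega
          rw [he]
          push_cast
          omega

lemma Nw_one {w : Fin u → Fin s} (hw : StrictMono w) (hu : u = s / 2) (hs : 0 < s) :
    Nw s u w 1 ≤ 1 := by
  by_cases hu0 : 1 ≤ u
  · rw [Nw_lower 1 ⟨le_rfl, hu0⟩]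
    have := (Pw_facts hw).1 1 le_rfl hu0
    push_cast
    omega
  · have hs1 : s = 1 := by omega
    rw [Nw_mid 1 (by omega) (by omega)]
    omega

end Wside

section Repz

noncomputable def repz (s : ℕ) (x : ℤ) : ℤ := (x - 1) % (s:ℤ) + 1

lemma repz_range (s : ℕ) (hs : 0 < s) (x : ℤ) : 1 ≤ repz s x ∧ repz s x ≤ s := by
  have h1 := Int.emod_nonneg (x - 1) (show (s:ℤ) ≠ 0 by exact_mod_cast hs.ne')
  have h2 := Int.emod_lt_of_pos (x - 1) (show (0:ℤ) < s by exact_mod_cast hs)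
  rw [repz]
  omega

lemma repz_dvd (s : ℕ) (x : ℤ) : (s:ℤ) ∣ (x - repz s x) := by
  rw [repz]
  have h := Int.emod_def (x - 1) (s:ℤ)
  refine ⟨(x - 1) / (s:ℤ), ?_⟩
  omega

lemma repz_unique (s : ℕ) (hs : 0 < s) (x y : ℤ) (h1 : 1 ≤ y) (h2 : y ≤ s)
    (hd : (s:ℤ) ∣ (x - y)) : repz s x = y := by
  have hsZ : (0:ℤ) < s := by exact_mod_cast hs
  have hr := repz_range s hs x
  have hd2 := repz_dvd s x
  have hd3 : (s:ℤ) ∣ (repz s x - y) := by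
    have he : repz s x - y = (x - y) - (x - repz s x) := by ring
    rw [he]
    exact dvd_sub hd hd2
  rcases le_or_gt y (repz s x) with h | h
  · have := dvd_small hsZ hd3 (by omega) (by omega)
    omega
  · have hd4 : (s:ℤ) ∣ (y - repz s x) := by
      have he : y - repz s x = -(repz s x - y) := by ring
      rw [he]
      exact dvd_neg.2 hd3
    have := dvd_small hsZ hd4 (by omega) (by omega)
    omega

lemma repz_congr (s : ℕ) (hs : 0 < s) (x y : ℤ) (hd : (s:ℤ) ∣ (x - y)) :
    repz s x = repz s y := by
  apply repz_unique s hs x (repz s y) (repz_range s hs y).1 (repz_range s hs y).2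
  have he : x - repz s y = (x - y) + (y - repz s y) := by ring
  rw [he]
  exact dvd_add hd (repz_dvd s y)

lemma class_dicho (s : ℕ) (hs : 0 < s) (a n : ℤ) (hd : (s:ℤ) ∣ n - a) :
    n ≤ a ∨ a + s ≤ n := by
  have hsZ : (0:ℤ) < s := by exact_mod_cast hs
  obtain ⟨k, hk⟩ := hd
  rcases le_or_gt k 0 with h | h
  · left; nlinarith
  · right; nlinarith

end Repz

section SwSet

variable {s u : ℕ}

noncomputable def CW (s u : ℕ) (w : Fin u → Fin s) (r : ℤ) : ℤ :=
  r + (s:ℤ) * (Nw s u w r.toNat - 1)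

noncomputable def Sw (s u : ℕ) (w : Fin u → Fin s) : Set ℤ :=
  {n | n ≤ CW s u w (repz s n)}

variable {w : Fin u → Fin s}

lemma Nw_bound (hw : StrictMono w) (hu : u = s / 2) :
    ∀ r : ℕ, -(s:ℤ) ≤ Nw s u w r ∧ Nw s u w r ≤ s := by
  intro r
  have hus : u ≤ s := by omega
  have huZ : (u:ℤ) ≤ (s:ℤ) := by exact_mod_cast hus
  by_cases h1 : 1 ≤ r ∧ r ≤ u
  · rw [Nw_lower r h1]
    have := (Pw_facts hw).1 r h1.1 h1.2
    have hr : (r:ℤ) ≤ (u:ℤ) := by exact_mod_cast h1.2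
    have hr1 : (1:ℤ) ≤ (r:ℤ) := by exact_mod_cast h1.1
    omega
  · by_cases h2 : 1 ≤ s + 1 - r ∧ s + 1 - r ≤ u ∧ r ≤ s
    · rw [Nw_upper r h1 h2]
      have := (Pw_facts hw).1 (s + 1 - r) h2.1 h2.2.1
      have hq1 : (1:ℤ) ≤ ((s + 1 - r : ℕ):ℤ) := by exact_mod_cast h2.1
      have hq2 : ((s + 1 - r : ℕ):ℤ) ≤ (u:ℤ) := by exact_mod_cast h2.2.1
      omega
    · rw [Nw_mid r h1 h2]
      have : (0:ℤ) ≤ s := Int.ofNat_nonneg s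
      omega

lemma CW_bounds (hw : StrictMono w) (hu : u = s / 2) (r : ℤ)
    (hr : 1 ≤ r ∧ r ≤ s) :
    1 - ((s:ℤ) * s + s) ≤ CW s u w r ∧ CW s u w r ≤ (s:ℤ) + s * s := by
  have hN := Nw_bound hw hu r.toNat
  have hs0 : (0:ℤ) ≤ s := Int.ofNat_nonneg s
  rw [CW]
  constructor
  · nlinarith [hN.1, hr.1]
  · nlinarith [hN.2, hr.2]

lemma Sw_bdd (hw : StrictMono w) (hu : u = s / 2) (hs : 0 < s) :
    ∃ B : ℤ, ∀ n ∈ Sw s u w, n ≤ B := by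
  refine ⟨(s:ℤ) + s * s, fun n hn => ?_⟩
  have hrr := repz_range s hs n
  exact le_trans hn (CW_bounds hw hu _ hrr).2

lemma Sw_lo (hw : StrictMono w) (hu : u = s / 2) (hs : 0 < s) :
    ∃ B : ℤ, ∀ n ≤ B, n ∈ Sw s u w := by
  refine ⟨1 - ((s:ℤ) * s + s), fun n hn => ?_⟩
  have hrr := repz_range s hs n
  exact le_trans hn (CW_bounds hw hu _ hrr).1

lemma CW_dvd (r : ℤ) : (s:ℤ) ∣ (CW s u w r - r) :=
  ⟨Nw s u w r.toNat - 1, by rw [CW]; ring⟩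

lemma Sw_closs (hs : 0 < s) : ∀ n ∈ Sw s u w, n - s ∈ Sw s u w := by
  intro n hn
  have hr : repz s (n - s) = repz s n :=
    repz_congr s hs _ _ ⟨-1, by ring⟩
  show n - s ≤ CW s u w (repz s (n - s))
  rw [hr]
  have hsz : (0:ℤ) ≤ s := Int.ofNat_nonneg s
  have := hn
  rw [Sw, Set.mem_setOf_eq] at this
  omega

lemma Sw_closs1 (hw : StrictMono w) (hu : u = s / 2) (hs : 0 < s) :
    ∀ n ∈ Sw s u w, n - s - 1 ∈ Sw s u w := by
  intro n hn
  rw [Sw, Set.mem_setOf_eq] at hn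
  have hsZ : (0:ℤ) < s := by exact_mod_cast hs
  set r := repz s n with hrdef
  have hrr := repz_range s hs n
  have hrc : repz s (n - s - 1) = repz s (n - 1) :=
    repz_congr s hs _ _ ⟨-1, by ring⟩
  show n - s - 1 ≤ CW s u w (repz s (n - s - 1))
  rw [hrc]
  by_cases h2 : 2 ≤ r
  · have hq : repz s (n - 1) = r - 1 := by
      apply repz_unique s hs _ _ (by omega) (by omega)
      have he : (n - 1) - (r - 1) = n - r := by ring
      rw [he]
      exact repz_dvd s n
    rw [hq]
    have hstep := Nw_step hw hu r.toNat (by omega) (by omega)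
    have ht : (r - 1).toNat = r.toNat - 1 := by omega
    simp only [CW] at hn ⊢
    rw [ht]
    have hrt : ((r.toNat : ℤ)) = r := by omega
    nlinarith [hstep, hn, hsZ]
  · have hr1 : r = 1 := by omega
    have hq : repz s (n - 1) = s := by
      apply repz_unique s hs _ _ (by omega) le_rfl
      have he : (n - 1) - (s:ℤ) = (n - r) + (r - 1 - s) := by ring
      rw [he]
      exact dvd_add (repz_dvd s n) (by rw [hr1]; exact ⟨-1, by ring⟩)
    rw [hq]
    have hanti := Nw_anti (w := w) hu 1 le_rfl (by omega)
    have hone := Nw_one hw hu hs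
    have hmid : s + 1 - 1 = s := by omega
    rw [hmid] at hanti
    rw [hr1] at hn
    simp only [CW] at hn ⊢
    have ht1 : ((1:ℤ)).toNat = 1 := rfl
    have hts : ((s:ℤ)).toNat = s := by omega
    rw [ht1] at hn
    rw [hts]
    nlinarith [hanti, hone, hn, hsZ]

lemma Sw_sym (hw : StrictMono w) (hu : u = s / 2) (hs : 0 < s) :
    ∀ n : ℤ, n ∈ Sw s u w ↔ (1 - n) ∉ Sw s u w := by
  intro n
  have hsZ : (0:ℤ) < s := by exact_mod_cast hs
  set r := repz s n with hrdef
  have hrr := repz_range s hs n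
  have hq : repz s (1 - n) = (s:ℤ) + 1 - r := by
    apply repz_unique s hs _ _ (by omega) (by omega)
    have he : (1 - n) - ((s:ℤ) + 1 - r) = -(n - r) - s := by ring
    rw [he]
    exact dvd_add (dvd_neg.2 (repz_dvd s n)) ⟨-1, by ring⟩
  have hanti := Nw_anti (w := w) hu r.toNat (by omega) (by omega)
  have hCWsum : CW s u w r + CW s u w ((s:ℤ) + 1 - r) = 1 - s := by
    simp only [CW]
    have ht : ((s:ℤ) + 1 - r).toNat = s + 1 - r.toNat := by omega
    rw [ht]
    have hrt : ((r.toNat : ℤ)) = r := by omega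
    have htc : (((s + 1 - r.toNat : ℕ)):ℤ) = (s:ℤ) + 1 - r := by omega
    nlinarith [hanti]
  have hd : (s:ℤ) ∣ (n - CW s u w r) := by
    have he : n - CW s u w r = (n - r) - (CW s u w r - r) := by ring
    rw [he]
    exact dvd_sub (repz_dvd s n) (CW_dvd r)
  have hdicho := class_dicho s hs (CW s u w r) n hd
  constructor
  · intro hmem hmem2
    rw [Sw, Set.mem_setOf_eq] at hmem hmem2
    rw [hq] at hmem2
    rw [← hrdef] at hmem
    omega
  · intro hnot
    rw [Sw, Set.mem_setOf_eq] at hnot ⊢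
    rw [hq] at hnot
    rw [← hrdef]
    omega

lemma cap_Sw (hw : StrictMono w) (hu : u = s / 2) (hs : 0 < s) (x : ℤ) :
    cap s (Sw s u w) x = CW s u w (repz s x) := by
  have hb := Sw_bdd hw hu hs
  have hlo := Sw_lo hw hu hs
  have h := cap_spec s hs hb hlo x
  have hrr := repz_range s hs x
  have hCWmem : CW s u w (repz s x) ∈ Sw s u w := by
    rw [Sw, Set.mem_setOf_eq]
    have : repz s (CW s u w (repz s x)) = repz s x := by
      apply repz_congr s hs
      have he2 : CW s u w (repz s x) - x
          = (CW s u w (repz s x) - repz s x) - (x - repz s x) := by ring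
      rw [he2]
      exact dvd_sub (CW_dvd (repz s x)) (repz_dvd s x)
    rw [this]
  have h1 : CW s u w (repz s x) ≤ cap s (Sw s u w) x := by
    apply h.2 _ hCWmem
    have he : CW s u w (repz s x) - x = (CW s u w (repz s x) - repz s x) - (x - repz s x) := by ring
    rw [he]
    exact dvd_sub (CW_dvd _) (repz_dvd s x)
  have h2 : cap s (Sw s u w) x ≤ CW s u w (repz s x) := by
    have hrc : repz s (cap s (Sw s u w) x) = repz s x := by
      apply repz_congr s hs
      exact h.1.2
    have hcmem' : cap s (Sw s u w) x ≤ CW s u w (repz s (cap s (Sw s u w) x)) := h.1.1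
    rwa [hrc] at hcmem'
  omega

lemma Nv_Sw (hw : StrictMono w) (hu : u = s / 2) (hs : 0 < s)
    (r : ℕ) (h1 : 1 ≤ r) (h2 : r ≤ s) : Nv s (Sw s u w) r = Nw s u w r := by
  have hcap := cap_Sw hw hu hs (r:ℤ)
  have hrep : repz s (r:ℤ) = r :=
    repz_unique s hs _ _ (by exact_mod_cast h1) (by exact_mod_cast h2) ⟨0, by ring⟩
  rw [Nv, hcap, hrep]
  have ht : ((r:ℤ)).toNat = r := by omega
  simp only [CW]
  rw [ht]
  have he : (r:ℤ) + (s:ℤ) * (Nw s u w r - 1) - r = (s:ℤ) * (Nw s u w r - 1) := by ring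
  rw [he, Int.mul_ediv_cancel_left _ (show (s:ℤ) ≠ 0 by exact_mod_cast hs.ne')]
  ring

end SwSet

section Assembly

lemma pchain_mono (s u : ℕ) (hu : u = s / 2) (N : ℕ → ℤ)
    (hstep : ∀ r, 2 ≤ r → r ≤ s → N r ≤ N (r - 1) + 1) :
    ∀ j i, 1 ≤ i → i ≤ j → j ≤ u → (i:ℤ) - N i ≤ (j:ℤ) - N j := by
  intro j
  induction j with
  | zero => intro i h1 h2 _; omega
  | succ j IH =>
    intro i h1 h2 h3
    rcases Nat.eq_or_lt_of_le h2 with rfl | hlt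
    · exact le_rfl
    · have hij : i ≤ j := by omega
      have hstep' := hstep (j + 1) (by omega) (by omega)
      have hj1 : (j + 1) - 1 = j := by omega
      rw [hj1] at hstep'
      have := IH i h1 hij (by omega)
      push_cast
      push_cast at this
      omega

noncomputable def phiW (s : ℕ) (hs : 0 < s) (N : ℕ → ℤ)
    (hanti : ∀ r, 1 ≤ r → r ≤ s → N r + N (s + 1 - r) = 0)
    (hstep : ∀ r, 2 ≤ r → r ≤ s → N r ≤ N (r - 1) + 1)
    (hone : N 1 ≤ 1) : Fin (s / 2) → Fin s :=
  fun k => ⟨(2 * (k:ℕ) + 1 - N ((k:ℕ) + 1)).toNat, by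
    have hk := k.2
    have hpc := pchain s (s / 2) rfl N hanti hstep hone ((k:ℕ) + 1) (by omega) (by omega)
    have hd2 : s / 2 ≤ s := by omega
    omega⟩

lemma phiW_val (s : ℕ) (hs : 0 < s) (N : ℕ → ℤ)
    (hanti : ∀ r, 1 ≤ r → r ≤ s → N r + N (s + 1 - r) = 0)
    (hstep : ∀ r, 2 ≤ r → r ≤ s → N r ≤ N (r - 1) + 1)
    (hone : N 1 ≤ 1) (k : Fin (s / 2)) :
    ((phiW s hs N hanti hstep hone k : ℕ) : ℤ) = 2 * (k:ℕ) + 1 - N ((k:ℕ) + 1) := by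
  have hk := k.2
  have hpc := pchain s (s / 2) rfl N hanti hstep hone ((k:ℕ) + 1) (by omega) (by omega)
  show (((2 * (k:ℕ) + 1 - N ((k:ℕ) + 1)).toNat : ℤ)) = _
  omega

lemma phiW_mono (s : ℕ) (hs : 0 < s) (N : ℕ → ℤ)
    (hanti : ∀ r, 1 ≤ r → r ≤ s → N r + N (s + 1 - r) = 0)
    (hstep : ∀ r, 2 ≤ r → r ≤ s → N r ≤ N (r - 1) + 1)
    (hone : N 1 ≤ 1) : StrictMono (phiW s hs N hanti hstep hone) := by
  intro k l hkl
  have hkl' : (k:ℕ) < (l:ℕ) := hkl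
  have hl2 := l.2
  have hmono := pchain_mono s (s / 2) rfl N hstep ((l:ℕ) + 1) ((k:ℕ) + 1) (by omega)
    (by omega) (by omega)
  have hvk := phiW_val s hs N hanti hstep hone k
  have hvl := phiW_val s hs N hanti hstep hone l
  rw [Fin.lt_def]
  push_cast at hmono
  omega

lemma Nw_phiW (s : ℕ) (hs : 0 < s) (N : ℕ → ℤ)
    (hanti : ∀ r, 1 ≤ r → r ≤ s → N r + N (s + 1 - r) = 0)
    (hstep : ∀ r, 2 ≤ r → r ≤ s → N r ≤ N (r - 1) + 1)
    (hone : N 1 ≤ 1) (r : ℕ) (h1 : 1 ≤ r) (h2 : r ≤ s) :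
    Nw s (s / 2) (phiW s hs N hanti hstep hone) r = N r := by
  set u := s / 2 with hu
  set w := phiW s hs N hanti hstep hone with hwdef
  have hPlow : ∀ q : ℕ, 1 ≤ q → q ≤ u → Pw s u w q = (q:ℤ) - N q := by
    intro q hq1 hq2
    rw [Pw, if_pos ⟨hq1, hq2⟩]
    have hlt : q - 1 < u := by omega
    rw [wext, dif_pos hlt]
    have hv := phiW_val s hs N hanti hstep hone ⟨q - 1, hlt⟩
    rw [← hwdef] at hv
    simp only at hv
    rw [hv]
    have he : q - 1 + 1 = q := by omega
    rw [he]
    push_cast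
    omega
  by_cases hc1 : r ≤ u
  · rw [Nw_lower r ⟨h1, hc1⟩, hPlow r h1 hc1]
    ring
  · by_cases hc2 : s + 1 - r ≤ u
    · have hq1 : 1 ≤ s + 1 - r := by omega
      rw [Nw_upper r (by omega) ⟨hq1, hc2, h2⟩, hPlow (s + 1 - r) hq1 hc2]
      have hanti' := hanti r h1 h2
      omega
    · -- middle : 2r = s + 1
      have hmid : 2 * r = s + 1 := by omega
      rw [Nw_mid r (by omega) (by omega)]
      have hanti' := hanti r h1 h2
      have he : s + 1 - r = r := by omega
      rw [he] at hanti'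
      omega

namespace YPartition

lemma beads_bdd (p : YPartition) : ∃ B : ℤ, ∀ n ∈ p.beads, n ≤ B := by
  refine ⟨p.g 0, ?_⟩
  rintro n ⟨i, hi⟩
  rw [← hi]
  exact p.g_strictAnti.antitone (Nat.zero_le i)

lemma beads_lo (p : YPartition) : ∃ B : ℤ, ∀ n ≤ B, n ∈ p.beads := by
  obtain ⟨N, hN⟩ := p.support_finite
  refine ⟨-(N:ℤ), fun n hn => ⟨(-n).toNat, ?_⟩⟩
  have h1 : (((-n).toNat : ℕ) : ℤ) = -n := Int.toNat_of_nonneg (by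
    have : (0:ℤ) ≤ (N:ℤ) := Int.ofNat_nonneg N
    omega)
  have h2 : N ≤ (-n).toNat := by omega
  rw [YPartition.g, hN _ h2]
  omega

lemma beads_closs (p : YPartition) (t : ℕ) (h : p.IsCore t) :
    ∀ n ∈ p.beads, n - t ∈ p.beads := (p.core_iff t).1 h

lemma beads_closs1 (p : YPartition) (t : ℕ) (h : p.IsCore (t + 1)) :
    ∀ n ∈ p.beads, n - t - 1 ∈ p.beads := by
  intro n hn
  have h2 := (p.core_iff (t + 1)).1 h n hn
  have he : n - ((t + 1 : ℕ) : ℤ) = n - t - 1 := by push_cast; ring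
  rwa [he] at h2

lemma beads_eq_imp_eq {p q : YPartition} (h : p.beads = q.beads) : p = q := by
  have hr : ∀ n : ℤ, (∃ i, p.g i = n) ↔ (∃ i, q.g i = n) := by
    intro n
    constructor
    · intro hmem
      have : n ∈ q.beads := h ▸ hmem
      exact this
    · intro hmem
      have : n ∈ p.beads := h.symm ▸ hmem
      exact this
  have := strictAnti_range_eq p.g_strictAnti q.g_strictAnti hr
  apply ext'
  intro i
  have hg := this i
  simp only [YPartition.g] at hg
  omega

end YPartition

end Assembly

section Final

lemma card_strictMono_subtype (s u : ℕ) :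
    Nat.card {w : Fin u → Fin s // StrictMono w} = s.choose u := by
  classical
  have e : {w : Fin u → Fin s // StrictMono w} ≃ {t : Finset (Fin s) // t.card = u} :=
    { toFun := fun w => ⟨Finset.univ.image w.1, by
        rw [Finset.card_image_of_injective _ w.2.injective, Finset.card_univ, Fintype.card_fin]⟩
      invFun := fun t => ⟨(t.1.orderEmbOfFin t.2 : Fin u → Fin s),
        (t.1.orderEmbOfFin t.2).strictMono⟩
      left_inv := fun w => by
        apply Subtype.ext
        exact (Finset.orderEmbOfFin_unique _
          (fun x => Finset.mem_image_of_mem _ (Finset.mem_univ x)) w.2).symm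
      right_inv := fun t => by
        apply Subtype.ext
        apply Finset.coe_injective
        rw [Finset.coe_image, Finset.coe_univ, Set.image_univ, Finset.range_orderEmbOfFin] }
  rw [Nat.card_congr e, Nat.card_eq_fintype_card, Fintype.card_finset_len, Fintype.card_fin]

noncomputable def Phi (s : ℕ) (hs : 0 < s)
    (p : {p : YPartition // p.IsSelfConjugate ∧ p.IsCore s ∧ p.IsCore (s + 1)}) :
    {w : Fin (s / 2) → Fin s // StrictMono w} :=
  ⟨phiW s hs (Nv s p.1.beads)
    (fun r h1 h2 => Nv_anti s hs p.1.beads_bdd p.1.beads_lo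
      ((p.1.selfConj_iff).1 p.2.1) (p.1.beads_closs s p.2.2.1) r h1 h2)
    (fun r h1 h2 => Nv_step s hs p.1.beads_bdd p.1.beads_lo
      (p.1.beads_closs1 s p.2.2.2) r h1 h2)
    (Nv_one s hs p.1.beads_bdd p.1.beads_lo ((p.1.selfConj_iff).1 p.2.1)
      (p.1.beads_closs s p.2.2.1) (p.1.beads_closs1 s p.2.2.2)),
   phiW_mono s hs _ _ _ _⟩

noncomputable def Psi (s : ℕ) (hs : 0 < s)
    (w : {w : Fin (s / 2) → Fin s // StrictMono w}) :
    {p : YPartition // p.IsSelfConjugate ∧ p.IsCore s ∧ p.IsCore (s + 1)} := by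
  refine ⟨ofSet (Sw_bdd w.2 rfl hs) (Sw_lo w.2 rfl hs) (Sw_sym w.2 rfl hs), ?_, ?_, ?_⟩
  · apply (YPartition.selfConj_iff _).2
    intro n
    rw [ofSet_beads]
    exact Sw_sym w.2 rfl hs n
  · apply (YPartition.core_iff _ s).2
    intro n hn
    rw [ofSet_beads] at hn ⊢
    exact Sw_closs hs n hn
  · apply (YPartition.core_iff _ (s + 1)).2
    intro n hn
    rw [ofSet_beads] at hn ⊢
    have h := Sw_closs1 w.2 rfl hs n hn
    have he : n - ((s + 1 : ℕ) : ℤ) = n - s - 1 := by push_cast; ring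
    rwa [he]

lemma Sw_phiW_eq (s : ℕ) (hs : 0 < s) (p : YPartition)
    (h1 : p.IsSelfConjugate) (h2 : p.IsCore s) (h3 : p.IsCore (s + 1))
    (hanti : ∀ r, 1 ≤ r → r ≤ s → Nv s p.beads r + Nv s p.beads (s + 1 - r) = 0)
    (hstep : ∀ r, 2 ≤ r → r ≤ s → Nv s p.beads r ≤ Nv s p.beads (r - 1) + 1)
    (hone : Nv s p.beads 1 ≤ 1) :
    Sw s (s / 2) (phiW s hs (Nv s p.beads) hanti hstep hone) = p.beads := by
  ext n
  set w := phiW s hs (Nv s p.beads) hanti hstep hone with hwdef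
  have hb := p.beads_bdd
  have hlo := p.beads_lo
  have hclos := p.beads_closs s h2
  have hrr := repz_range s hs n
  have hrt : (((repz s n).toNat : ℕ) : ℤ) = repz s n := by omega
  have hNw := Nw_phiW s hs (Nv s p.beads) hanti hstep hone (repz s n).toNat
    (by omega) (by omega)
  have hcapc : cap s p.beads n = cap s p.beads (repz s n) :=
    cap_congr s _ _ (repz_dvd s n)
  have hcape := cap_eq_Nv s hs hb hlo (repz s n).toNat
  rw [hrt] at hcape
  have hCW : CW s (s / 2) w (repz s n) = cap s p.beads n := by
    rw [CW]
    rw [← hwdef] at hNw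
    rw [hNw, hcapc, hcape]
  show (n ≤ CW s (s / 2) w (repz s n)) ↔ n ∈ p.beads
  rw [hCW, hcapc]
  rw [← hcapc]
  exact (mem_iff_le_cap s hs hb hlo hclos n).symm

lemma PhiPsi_left (s : ℕ) (hs : 0 < s)
    (p : {p : YPartition // p.IsSelfConjugate ∧ p.IsCore s ∧ p.IsCore (s + 1)}) :
    Psi s hs (Phi s hs p) = p := by
  apply Subtype.ext
  apply YPartition.beads_eq_imp_eq
  have hbe : (Psi s hs (Phi s hs p)).1.beads = Sw s (s / 2) (Phi s hs p).1 :=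
    ofSet_beads (Sw_bdd (Phi s hs p).2 rfl hs) (Sw_lo (Phi s hs p).2 rfl hs)
      (Sw_sym (Phi s hs p).2 rfl hs)
  rw [hbe]
  exact Sw_phiW_eq s hs p.1 p.2.1 p.2.2.1 p.2.2.2
    (fun r h1 h2 => Nv_anti s hs p.1.beads_bdd p.1.beads_lo
      ((p.1.selfConj_iff).1 p.2.1) (p.1.beads_closs s p.2.2.1) r h1 h2)
    (fun r h1 h2 => Nv_step s hs p.1.beads_bdd p.1.beads_lo
      (p.1.beads_closs1 s p.2.2.2) r h1 h2)
    (Nv_one s hs p.1.beads_bdd p.1.beads_lo ((p.1.selfConj_iff).1 p.2.1)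
      (p.1.beads_closs s p.2.2.1) (p.1.beads_closs1 s p.2.2.2))

lemma PhiPsi_right (s : ℕ) (hs : 0 < s)
    (w : {w : Fin (s / 2) → Fin s // StrictMono w}) :
    Phi s hs (Psi s hs w) = w := by
  apply Subtype.ext
  funext k
  apply Fin.ext
  have hk := k.2
  have hd2 : s / 2 ≤ s := by omega
  set p := (Psi s hs w).1 with hpdef
  have hbe : p.beads = Sw s (s / 2) w.1 :=
    ofSet_beads (Sw_bdd w.2 rfl hs) (Sw_lo w.2 rfl hs) (Sw_sym w.2 rfl hs)
  have hval := phiW_val s hs (Nv s p.beads)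
    (fun r h1 h2 => Nv_anti s hs p.beads_bdd p.beads_lo
      ((p.selfConj_iff).1 (Psi s hs w).2.1) (p.beads_closs s (Psi s hs w).2.2.1) r h1 h2)
    (fun r h1 h2 => Nv_step s hs p.beads_bdd p.beads_lo
      (p.beads_closs1 s (Psi s hs w).2.2.2) r h1 h2)
    (Nv_one s hs p.beads_bdd p.beads_lo ((p.selfConj_iff).1 (Psi s hs w).2.1)
      (p.beads_closs s (Psi s hs w).2.2.1) (p.beads_closs1 s (Psi s hs w).2.2.2)) k
  have hNv : Nv s p.beads ((k:ℕ) + 1) = Nw s (s / 2) w.1 ((k:ℕ) + 1) := by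
    rw [hbe]
    exact Nv_Sw w.2 rfl hs ((k:ℕ) + 1) (by omega) (by omega)
  have hNwk : Nw s (s / 2) w.1 ((k:ℕ) + 1) = ((k:ℕ) + 1 : ℤ) - Pw s (s / 2) w.1 ((k:ℕ) + 1) :=
    Nw_lower _ ⟨by omega, by omega⟩
  have hPw : Pw s (s / 2) w.1 ((k:ℕ) + 1) = ((w.1 k : ℕ) : ℤ) - (k:ℕ) := by
    rw [Pw, if_pos ⟨by omega, by omega⟩]
    have he : (k:ℕ) + 1 - 1 = (k:ℕ) := by omega
    rw [he, wext, dif_pos hk]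
  have hval' : (((Phi s hs (Psi s hs w)).1 k : ℕ) : ℤ)
      = 2 * (k:ℕ) + 1 - Nv s p.beads ((k:ℕ) + 1) := hval
  have hfin : (((Phi s hs (Psi s hs w)).1 k : ℕ) : ℤ) = ((w.1 k : ℕ) : ℤ) := by
    rw [hval', hNv, hNwk, hPw]
    omega
  exact_mod_cast hfin

theorem count_selfConjugate_core_succ' (s : ℕ) (hs : 0 < s) :
    Nat.card {p : YPartition // p.IsSelfConjugate ∧ p.IsCore s ∧ p.IsCore (s + 1)} =
      s.choose (s / 2) := by
  have e : {p : YPartition // p.IsSelfConjugate ∧ p.IsCore s ∧ p.IsCore (s + 1)} ≃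
      {w : Fin (s / 2) → Fin s // StrictMono w} :=
    ⟨Phi s hs, Psi s hs, PhiPsi_left s hs, PhiPsi_right s hs⟩
  rw [Nat.card_congr e, card_strictMono_subtype]

end Final

/-- For every positive integer `s`, the number of self-conjugate `(s, s+1)`-core
partitions is `C(s, ⌊s/2⌋)`. -/
theorem count_selfConjugate_core_succ (s : ℕ) (hs : 0 < s) :
    Nat.card {p : YPartition // p.IsSelfConjugate ∧ p.IsCore s ∧ p.IsCore (s + 1)} =
      s.choose (s / 2) := count_selfConjugate_core_succ' s hs
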